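/- arXiv:1803.05531 — 8 statements merged into one kernel-verified Lean document; each statement's English description precedes it below -/
import Mathlib

section
/- If f_1, ..., f_N are unit vectors in C^d with N >= d, then the maximum over i ≠ j of |⟨f_i, f_j⟩| is at least sqrt((N-d)/(d(N-1))). -/
/-!
Let `S = ∑ᵢ ∑ⱼ |⟨fᵢ, fⱼ⟩|²` be the frame potential and `A` the `d × N` matrix with columns `fᵢ`.
Then `S` is the squared Frobenius norm of the Gram matrix `AᴴA`, which equals that of the
`d × d` frame operator `AAᴴ`, and `tr (AAᴴ) = ∑ ‖fᵢ‖² = N`; Cauchy–Schwarz on the diagonal of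
`AAᴴ` gives `N² ≤ d S`. On the other hand the `N` diagonal terms of `S` are `1` and the
`N (N - 1)` others are at most `c²`, where `c` is the maximal coherence, so
`S ≤ N (1 + (N - 1) c²)`. Comparing the two bounds gives `N - d ≤ d (N - 1) c²`.
-/

open Finset Matrix
open scoped InnerProductSpace

namespace Matrix

variable {m n 𝕜 : Type*} [Fintype m] [Fintype n] [RCLike 𝕜]

theorem re_trace_conjTranspose_mul_self (A : Matrix m n 𝕜) :
    RCLike.re (Aᴴ * A).trace = ∑ i, ∑ j, ‖A i j‖ ^ 2 := by
  rw [trace, map_sum, sum_comm]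
  refine sum_congr rfl fun j _ => ?_
  simp only [diag_apply, mul_apply, conjTranspose_apply, map_sum, RCLike.star_def,
    RCLike.conj_mul, ← RCLike.ofReal_pow, RCLike.ofReal_re]

theorem sum_norm_sq_conjTranspose_mul_self_eq (A : Matrix m n 𝕜) :
    ∑ i, ∑ j, ‖(Aᴴ * A) i j‖ ^ 2 = ∑ i, ∑ j, ‖(A * Aᴴ) i j‖ ^ 2 := by
  simp only [← re_trace_conjTranspose_mul_self, conjTranspose_mul, conjTranspose_conjTranspose]
  rw [Matrix.mul_assoc, trace_mul_comm]
  simp only [Matrix.mul_assoc]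

theorem norm_trace_sq_le (M : Matrix n n 𝕜) :
    ‖M.trace‖ ^ 2 ≤ Fintype.card n * ∑ i, ∑ j, ‖M i j‖ ^ 2 := calc
  ‖M.trace‖ ^ 2 ≤ (∑ i, ‖M i i‖) ^ 2 := by gcongr; exact norm_sum_le _ _
  _ ≤ Fintype.card n * ∑ i, ‖M i i‖ ^ 2 := sq_sum_le_card_mul_sum_sq
  _ ≤ Fintype.card n * ∑ i, ∑ j, ‖M i j‖ ^ 2 := by
    gcongr with i
    exact single_le_sum (f := fun j => ‖M i j‖ ^ 2) (fun _ _ => by positivity) (mem_univ i)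

end Matrix

theorem EuclideanSpace.gram_eq_conjTranspose_mul_self {ι 𝕜 n : Type*} [RCLike 𝕜] [Fintype n]
    (v : ι → EuclideanSpace 𝕜 n) :
    gram 𝕜 v = (Matrix.of fun k i => v i k)ᴴ * Matrix.of fun k i => v i k := by
  ext i j
  simp [mul_apply, PiLp.inner_apply, RCLike.inner_apply, mul_comm]

section FramePotential

variable {ι 𝕜 E : Type*} [Fintype ι] [RCLike 𝕜] [NormedAddCommGroup E] [InnerProductSpace 𝕜 E]

variable (𝕜) in
noncomputable def framePotential (v : ι → E) : ℝ := ∑ i, ∑ j, ‖⟪v i, v j⟫_𝕜‖ ^ 2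

theorem EuclideanSpace.sq_sum_norm_sq_le_card_mul_framePotential {n : Type*} [Fintype n]
    (v : ι → EuclideanSpace 𝕜 n) :
    (∑ i, ‖v i‖ ^ 2) ^ 2 ≤ Fintype.card n * framePotential 𝕜 v := by
  set A : Matrix n ι 𝕜 := Matrix.of fun k i => v i k
  have trace_eq : (A * Aᴴ).trace = ((∑ i, ‖v i‖ ^ 2 : ℝ) : 𝕜) := by
    rw [trace_mul_comm, ← EuclideanSpace.gram_eq_conjTranspose_mul_self, trace]
    push_cast
    exact sum_congr rfl fun i _ => inner_self_eq_norm_sq_to_K (v i)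
  have frobenius_eq : framePotential 𝕜 v = ∑ k, ∑ l, ‖(A * Aᴴ) k l‖ ^ 2 := by
    rw [← sum_norm_sq_conjTranspose_mul_self_eq, ← EuclideanSpace.gram_eq_conjTranspose_mul_self]
    rfl
  calc (∑ i, ‖v i‖ ^ 2) ^ 2 = ‖(A * Aᴴ).trace‖ ^ 2 := by
        rw [trace_eq, RCLike.norm_ofReal, abs_of_nonneg (by positivity)]
    _ ≤ _ := frobenius_eq ▸ norm_trace_sq_le _

theorem sq_sum_norm_sq_le_finrank_mul_framePotential [FiniteDimensional 𝕜 E] (v : ι → E) :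
    (∑ i, ‖v i‖ ^ 2) ^ 2 ≤ Module.finrank 𝕜 E * framePotential 𝕜 v := by
  simpa [framePotential, LinearIsometryEquiv.inner_map_map] using
    EuclideanSpace.sq_sum_norm_sq_le_card_mul_framePotential
      fun i => (stdOrthonormalBasis 𝕜 E).repr (v i)

theorem framePotential_le_of_norm_inner_le {v : ι → E} {c : ℝ} (hv : ∀ i, ‖v i‖ = 1)
    (hc : ∀ i j, i ≠ j → ‖⟪v i, v j⟫_𝕜‖ ≤ c) :
    framePotential 𝕜 v ≤ Fintype.card ι * (1 + (Fintype.card ι - 1) * c ^ 2) := by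
  classical
  have row_le : ∀ i, ∑ j, ‖⟪v i, v j⟫_𝕜‖ ^ 2 ≤ 1 + (Fintype.card ι - 1) * c ^ 2 := by
    intro i
    rw [← add_sum_erase _ _ (mem_univ i), inner_self_eq_norm_sq_to_K, hv]
    calc _ ≤ 1 + ∑ j ∈ univ.erase i, c ^ 2 := by
          simp only [RCLike.ofReal_one, one_pow, norm_one]
          gcongr with j hj
          exact hc i j (ne_of_mem_erase hj).symm
      _ = _ := by simp [sum_erase_eq_sub (mem_univ i), sub_mul]
  exact (sum_le_card_nsmul univ _ _ fun i _ => row_le i).trans_eq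
    (by rw [card_univ, nsmul_eq_mul])

end FramePotential

theorem welch_bound_general (d N : ℕ) (hN2 : 2 ≤ N)
    (f : Fin N → EuclideanSpace ℂ (Fin d)) (hnorm : ∀ i, ‖f i‖ = 1) :
    ∃ i j : Fin N, i ≠ j ∧
      Real.sqrt (((N : ℝ) - d) / (d * ((N : ℝ) - 1))) ≤ ‖(inner ℂ (f i) (f j) : ℂ)‖ := by
  have : Nontrivial (Fin N) := Fin.nontrivial_iff_two_le.mpr hN2
  obtain ⟨i₀, j₀, hij₀⟩ := exists_pair_ne (Fin N)
  obtain ⟨⟨i, j⟩, hij, hmax⟩ := exists_max_image (univ : Finset (Fin N)).offDiag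
    (fun p => ‖⟪f p.1, f p.2⟫_ℂ‖) ⟨(i₀, j₀), by simpa using hij₀⟩
  set c := ‖⟪f i, f j⟫_ℂ‖
  have sum_norm_sq : ∑ i, ‖f i‖ ^ 2 = N := by simp [hnorm]
  have lower := sq_sum_norm_sq_le_finrank_mul_framePotential (𝕜 := ℂ) f
  rw [sum_norm_sq, finrank_euclideanSpace_fin] at lower
  have upper : framePotential ℂ f ≤ N * (1 + (N - 1) * c ^ 2) := by
    simpa using framePotential_le_of_norm_inner_le (𝕜 := ℂ) hnorm
      fun i' j' hne => hmax (i', j') (by simpa using hne)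
  have hN : (2 : ℝ) ≤ N := by exact_mod_cast hN2
  have cross_multiplied : (N : ℝ) - d ≤ c ^ 2 * (d * (N - 1)) := by
    nlinarith [lower.trans (mul_le_mul_of_nonneg_left upper (Nat.cast_nonneg d))]
  refine ⟨i, j, by simpa using hij, Real.sqrt_le_iff.mpr ⟨norm_nonneg _, ?_⟩⟩
  exact div_le_of_le_mul₀ (mul_nonneg d.cast_nonneg (by linarith)) (sq_nonneg c) cross_multiplied

/-- The Welch bound: for `N ≥ d` unit vectors in `ℂ^d`, the maximum coherence
`max_{i ≠ j} |⟨f_i, f_j⟩|` is at least `√((N-d)/(d(N-1)))`. -/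
theorem welch_bound (d N : ℕ) (hd : 0 < d) (hN : d ≤ N) (hN2 : 2 ≤ N)
    (f : Fin N → EuclideanSpace ℂ (Fin d)) (hnorm : ∀ i, ‖f i‖ = 1) :
    ∃ i j : Fin N, i ≠ j ∧
      Real.sqrt (((N : ℝ) - d) / (d * ((N : ℝ) - 1))) ≤ ‖(inner ℂ (f i) (f j) : ℂ)‖ :=
  welch_bound_general d N hN2 f hnorm
end

section
/- Let d be odd, k = (d+1)/2, and let {f_i}_{i=1}^{d+1} ⊂ R^d be a simplex ETF with ⟨f_i, f_j⟩ = -1/d for i ≠ j. For any subset Λ ⊆ {1,...,d+1} with |Λ| = k, the vector g = (Σ_{i∈Λ} f_i)/||Σ_{i∈Λ} f_i|| satisfies max_{1 ≤ j ≤ d+1} |⟨g, f_j⟩| = 1/√d. -/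
/-!
Write `s = ∑_{i ∈ Λ} f i` with `|Λ| = k`. The Gram relations give `⟪s, f j⟫ = 1 - (k - 1)/d` for
`j ∈ Λ` and `⟪s, f j⟫ = -k/d` for `j ∉ Λ`; exactly when `2k = d + 1` these have the same absolute
value `k/d`. Summing over `Λ` gives `‖s‖² = k²/d`, so every `|⟪s/‖s‖, f j⟫|` equals `1/√d`.
-/

open Finset RealInnerProductSpace

section

variable {E ι : Type*} [NormedAddCommGroup E] [InnerProductSpace ℝ E] {f : ι → E} {c : ℝ}
  {Λ : Finset ι}

theorem inner_sum_of_mem (hnorm : ∀ i, ‖f i‖ = 1) (hangle : ∀ i j, i ≠ j → ⟪f i, f j⟫ = c)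
    {j : ι} (hj : j ∈ Λ) : ⟪∑ i ∈ Λ, f i, f j⟫ = 1 + (#Λ - 1 : ℝ) * c := by
  classical
  have hself : ⟪f j, f j⟫ = 1 := by rw [real_inner_self_eq_norm_sq, hnorm j, one_pow]
  rw [sum_inner, ← add_sum_erase _ _ hj, hself,
    sum_congr rfl fun i hi => hangle i j (ne_of_mem_erase hi), sum_const, card_erase_of_mem hj,
    nsmul_eq_mul, Nat.cast_pred (card_pos.2 ⟨j, hj⟩)]

theorem inner_sum_of_notMem (hangle : ∀ i j, i ≠ j → ⟪f i, f j⟫ = c) {j : ι} (hj : j ∉ Λ) :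
    ⟪∑ i ∈ Λ, f i, f j⟫ = #Λ * c := by
  rw [sum_inner, sum_congr rfl fun i hi => hangle i j (ne_of_mem_of_not_mem hi hj), sum_const,
    nsmul_eq_mul]

variable {d : ℕ}

theorem inner_sum_of_mem_of_two_mul_card_eq (hnorm : ∀ i, ‖f i‖ = 1)
    (hangle : ∀ i j, i ≠ j → ⟪f i, f j⟫ = -1 / d) (hΛ : 2 * #Λ = d + 1) {j : ι} (hj : j ∈ Λ) :
    ⟪∑ i ∈ Λ, f i, f j⟫ = #Λ / d := by
  have hd : (d : ℝ) ≠ 0 := by norm_cast; omega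
  have hΛR : (2 * #Λ : ℝ) = d + 1 := by exact_mod_cast hΛ
  rw [inner_sum_of_mem hnorm hangle hj]
  field_simp
  linarith

theorem abs_inner_sum_of_two_mul_card_eq (hnorm : ∀ i, ‖f i‖ = 1)
    (hangle : ∀ i j, i ≠ j → ⟪f i, f j⟫ = -1 / d) (hΛ : 2 * #Λ = d + 1) (j : ι) :
    |⟪∑ i ∈ Λ, f i, f j⟫| = #Λ / d := by
  by_cases hj : j ∈ Λ
  · rw [inner_sum_of_mem_of_two_mul_card_eq hnorm hangle hΛ hj, abs_of_nonneg (by positivity)]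
  · rw [inner_sum_of_notMem hangle hj, mul_div, mul_neg_one, neg_div, abs_neg,
      abs_of_nonneg (by positivity)]

theorem norm_sum_of_two_mul_card_eq (hnorm : ∀ i, ‖f i‖ = 1)
    (hangle : ∀ i j, i ≠ j → ⟪f i, f j⟫ = -1 / d) (hΛ : 2 * #Λ = d + 1) :
    ‖∑ i ∈ Λ, f i‖ = #Λ / √d := by
  have hsq : ‖∑ i ∈ Λ, f i‖ ^ 2 = (#Λ / √d) ^ 2 := by
    rw [← real_inner_self_eq_norm_sq, inner_sum,
      sum_congr rfl fun j hj => inner_sum_of_mem_of_two_mul_card_eq hnorm hangle hΛ hj,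
      sum_const, nsmul_eq_mul, div_pow, Real.sq_sqrt d.cast_nonneg]
    ring
  exact (pow_left_inj₀ (norm_nonneg _) (by positivity) two_ne_zero).1 hsq

end

theorem max_coherence_normalized_sum_odd_general (d k : ℕ)
    (hk : 2 * k = d + 1)
    (f : Fin (d + 1) → EuclideanSpace ℝ (Fin d))
    (hnorm : ∀ i, ‖f i‖ = 1)
    (hangle : ∀ i j, i ≠ j → (inner ℝ (f i) (f j) : ℝ) = -1 / d)
    (Λ : Finset (Fin (d + 1))) (hcard : Λ.card = k)
    (g : EuclideanSpace ℝ (Fin d)) (hg : g = ‖∑ i ∈ Λ, f i‖⁻¹ • ∑ i ∈ Λ, f i) :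
    IsGreatest {x : ℝ | ∃ j : Fin (d + 1), x = |(inner ℝ g (f j) : ℝ)|}
      (1 / Real.sqrt d) := by
  subst hcard
  have hΛ : (#Λ : ℝ) ≠ 0 := by norm_cast; omega
  have hd : (0 : ℝ) < d := by norm_cast; omega
  have hcoherence (j : Fin (d + 1)) : |⟪g, f j⟫| = 1 / √d := by
    rw [hg, real_inner_smul_left, abs_mul, abs_inv, abs_norm,
      norm_sum_of_two_mul_card_eq hnorm hangle hk, abs_inner_sum_of_two_mul_card_eq hnorm hangle hk]
    field_simp
    exact Real.sq_sqrt hd.le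
  refine ⟨⟨0, (hcoherence 0).symm⟩, ?_⟩
  rintro x ⟨j, rfl⟩
  exact (hcoherence j).le

/-- For `d` odd and `k = (d+1)/2`, the normalized sum `g` of any `k` vectors of a
simplex ETF in `ℝ^d` satisfies `max_j |⟨g, f_j⟩| = 1/√d`. -/
theorem max_coherence_normalized_sum_odd (d k : ℕ) (hd : 0 < d) (hodd : Odd d)
    (hk : 2 * k = d + 1)
    (f : Fin (d + 1) → EuclideanSpace ℝ (Fin d))
    (hnorm : ∀ i, ‖f i‖ = 1)
    (hangle : ∀ i j, i ≠ j → (inner ℝ (f i) (f j) : ℝ) = -1 / d)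
    (Λ : Finset (Fin (d + 1))) (hcard : Λ.card = k)
    (g : EuclideanSpace ℝ (Fin d)) (hg : g = ‖∑ i ∈ Λ, f i‖⁻¹ • ∑ i ∈ Λ, f i) :
    IsGreatest {x : ℝ | ∃ j : Fin (d + 1), x = |(inner ℝ g (f j) : ℝ)|}
      (1 / Real.sqrt d) :=
  max_coherence_normalized_sum_odd_general d k hk f hnorm hangle Λ hcard g hg
end

section
/- Let d be even, k = (d+2)/2, and let {f_i}_{i=1}^{d+1} ⊂ R^d be a simplex ETF with ⟨f_i, f_j⟩ = -1/d for i ≠ j. For any subset Λ of size k, the vector g = (Σ_{i∈Λ} f_i)/||Σ_{i∈Λ} f_i|| satisfies max_{1 ≤ j ≤ d+1} |⟨g, f_j⟩| ≤ sqrt((d+2)/d^2). -/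
/-!
The sum `S` of `k` unit vectors with pairwise inner products `c` has `⟨S, f_j⟩ = 1 + (k-1)c`
for `j ∈ Λ` and `k c` otherwise, hence `‖S‖² = k(1 + (k-1)c)`. For the simplex ETF with
`k = (d+2)/2` these are `1/2`, `-(d+2)/(2d)` and `(d+2)/4`, so
`⟨g, f_j⟩² ≤ ((d+2)/(2d))² / ((d+2)/4) = (d+2)/d²`.
-/

open Finset RealInnerProductSpace

section Equiangular

variable {E ι : Type*} [NormedAddCommGroup E] [InnerProductSpace ℝ E]
  {f : ι → E} {c : ℝ} {Λ : Finset ι} {j : ι}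

theorem inner_sum_of_equiangular_of_mem (hnorm : ∀ i, ‖f i‖ = 1) (hangle : ∀ i j, i ≠ j → ⟪f i, f j⟫ = c)
    (hj : j ∈ Λ) : ⟪∑ i ∈ Λ, f i, f j⟫ = 1 + (#Λ - 1 : ℝ) * c := by
  classical
  rw [sum_inner, ← add_sum_erase _ _ hj, real_inner_self_eq_norm_sq, hnorm,
    sum_congr rfl fun i hi => hangle i j (ne_of_mem_erase hi), sum_const,
    card_erase_of_mem hj, nsmul_eq_mul, Nat.cast_pred (card_pos.mpr ⟨j, hj⟩)]
  ring

theorem inner_sum_of_equiangular_of_notMem (hangle : ∀ i j, i ≠ j → ⟪f i, f j⟫ = c) (hj : j ∉ Λ) :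
    ⟪∑ i ∈ Λ, f i, f j⟫ = #Λ * c := by
  rw [sum_inner, sum_congr rfl fun i hi => hangle i j (ne_of_mem_of_not_mem hi hj),
    sum_const, nsmul_eq_mul]

theorem norm_sum_sq_of_equiangular (hnorm : ∀ i, ‖f i‖ = 1)
    (hangle : ∀ i j, i ≠ j → ⟪f i, f j⟫ = c) :
    ‖∑ i ∈ Λ, f i‖ ^ 2 = #Λ * (1 + (#Λ - 1 : ℝ) * c) := by
  rw [← real_inner_self_eq_norm_sq, inner_sum, sum_congr rfl fun j hj => inner_sum_of_equiangular_of_mem hnorm hangle hj, sum_const,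
    nsmul_eq_mul]

end Equiangular

theorem max_coherence_normalized_sum_even_general (d k : ℕ) (hd : 0 < d)
    (hk : 2 * k = d + 2)
    (f : Fin (d + 1) → EuclideanSpace ℝ (Fin d))
    (hnorm : ∀ i, ‖f i‖ = 1)
    (hangle : ∀ i j, i ≠ j → (inner ℝ (f i) (f j) : ℝ) = -1 / d)
    (Λ : Finset (Fin (d + 1))) (hcard : Λ.card = k)
    (g : EuclideanSpace ℝ (Fin d)) (hg : g = ‖∑ i ∈ Λ, f i‖⁻¹ • ∑ i ∈ Λ, f i) :
    ∀ j : Fin (d + 1),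
      |(inner ℝ g (f j) : ℝ)| ≤ Real.sqrt (((d : ℝ) + 2) / (d : ℝ) ^ 2) := by
  intro j
  have hd0 : (0 : ℝ) < d := by exact_mod_cast hd
  have hkR : (2 : ℝ) * #Λ = d + 2 := by rw [hcard]; exact_mod_cast hk
  have hS : ‖∑ i ∈ Λ, f i‖ ^ 2 = (d + 2) / 4 := by
    rw [norm_sum_sq_of_equiangular hnorm hangle]
    field_simp
    nlinarith
  have hSj : ⟪∑ i ∈ Λ, f i, f j⟫ ^ 2 ≤ ((d + 2) / (2 * d)) ^ 2 := by
    by_cases hj : j ∈ Λ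
    · rw [inner_sum_of_equiangular_of_mem hnorm hangle hj]
      have hin : 1 + (#Λ - 1 : ℝ) * (-1 / d) = 1 / 2 := by
        field_simp
        linarith
      rw [hin]
      apply pow_le_pow_left₀ (by norm_num)
      rw [div_le_div_iff₀ (by norm_num) (by positivity)]
      linarith
    · rw [inner_sum_of_equiangular_of_notMem hangle hj]
      apply le_of_eq
      field_simp
      nlinarith
  apply Real.abs_le_sqrt
  rw [hg, real_inner_smul_left, mul_pow, inv_pow, hS]
  calc (((d : ℝ) + 2) / 4)⁻¹ * ⟪∑ i ∈ Λ, f i, f j⟫ ^ 2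
      ≤ (((d : ℝ) + 2) / 4)⁻¹ * ((d + 2) / (2 * d)) ^ 2 := by gcongr
    _ = ((d : ℝ) + 2) / (d : ℝ) ^ 2 := by field_simp; ring

/-- For `d` even and `k = (d+2)/2`, the normalized sum `g` of any `k` vectors of a
simplex ETF in `ℝ^d` satisfies `max_j |⟨g, f_j⟩| ≤ √((d+2)/d²)`. -/
theorem max_coherence_normalized_sum_even (d k : ℕ) (hd : 0 < d) (heven : Even d)
    (hk : 2 * k = d + 2)
    (f : Fin (d + 1) → EuclideanSpace ℝ (Fin d))
    (hnorm : ∀ i, ‖f i‖ = 1)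
    (hangle : ∀ i j, i ≠ j → (inner ℝ (f i) (f j) : ℝ) = -1 / d)
    (Λ : Finset (Fin (d + 1))) (hcard : Λ.card = k)
    (g : EuclideanSpace ℝ (Fin d)) (hg : g = ‖∑ i ∈ Λ, f i‖⁻¹ • ∑ i ∈ Λ, f i) :
    ∀ j : Fin (d + 1),
      |(inner ℝ g (f j) : ℝ)| ≤ Real.sqrt (((d : ℝ) + 2) / (d : ℝ) ^ 2) :=
  max_coherence_normalized_sum_even_general d k hd hk f hnorm hangle Λ hcard g hg
end

section
/- Let {f_i}_{i=1}^{d+1} ⊂ R^d be a simplex ETF (⟨f_i, f_j⟩ = -1/d for i ≠ j). Let Λ_1, Λ_2 ⊆ {1,...,d+1} be two subsets each of size k with |Λ_1 ∩ Λ_2| = l, and let g_i = (Σ_{j∈Λ_i} f_j)/||Σ_{j∈Λ_i} f_j|| for i = 1, 2. Then |⟨g_1, g_2⟩| = ((d+1)/(k(d+1-k))) · |l - k^2/(d+1)|. -/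
/-!
The Gram matrix of unit vectors with constant pairwise inner product `c` is `(1 - c) I + c J`,
so the inner product of the sums over `A` and `B` is `|A ∩ B| (1 - c) + |A| |B| c`: it only sees
the sizes of `A`, `B` and `A ∩ B`. For `c = -1/d` both sums have squared norm `k (d + 1 - k) / d`,
and the normalized inner product is `(l (d + 1) - k²) / (k (d + 1 - k))`.
-/

open Finset
open scoped RealInnerProductSpace

section
variable {ι E : Type*} [NormedAddCommGroup E] [InnerProductSpace ℝ E]

theorem inner_sum_sum_of_equiangular [DecidableEq ι] {f : ι → E} {c : ℝ}
    (hnorm : ∀ i, ‖f i‖ = 1) (hangle : ∀ i j, i ≠ j → ⟪f i, f j⟫ = c) (A B : Finset ι) :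
    ⟪∑ i ∈ A, f i, ∑ j ∈ B, f j⟫ = #(A ∩ B) * (1 - c) + #A * #B * c := by
  have hgram : ∀ i j, ⟪f i, f j⟫ = (if i = j then 1 - c else 0) + c := by
    intro i j
    split_ifs with h
    · rw [h, real_inner_self_eq_norm_sq, hnorm]; ring
    · rw [hangle i j h, zero_add]
  simp only [sum_inner, inner_sum, hgram, sum_add_distrib, sum_ite_eq', sum_const, nsmul_eq_mul,
    sum_ite_mem, inter_comm B A]
  ring

theorem norm_sq_sum_of_equiangular [DecidableEq ι] {f : ι → E} {c : ℝ}
    (hnorm : ∀ i, ‖f i‖ = 1) (hangle : ∀ i j, i ≠ j → ⟪f i, f j⟫ = c) (A : Finset ι) :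
    ‖∑ i ∈ A, f i‖ ^ 2 = #A * (1 - c) + #A ^ 2 * c := by
  rw [← real_inner_self_eq_norm_sq, inner_sum_sum_of_equiangular hnorm hangle, inter_self]
  ring

theorem real_inner_inv_norm_smul_of_norm_eq {u v : E} (h : ‖u‖ = ‖v‖) :
    ⟪‖u‖⁻¹ • u, ‖v‖⁻¹ • v⟫ = ⟪u, v⟫ / ‖u‖ ^ 2 := by
  rw [real_inner_smul_left, real_inner_smul_right, ← h]
  field_simp

end

theorem abs_simplex_gram_ratio {d k l : ℝ} (hd : 0 < d) (hk₀ : 0 ≤ k) (hk : k ≤ d + 1) :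
    |(l * (1 - -1 / d) + k * k * (-1 / d)) / (k * (1 - -1 / d) + k ^ 2 * (-1 / d))| =
      (d + 1) / (k * (d + 1 - k)) * |l - k ^ 2 / (d + 1)| := by
  have hnum : l * (1 - -1 / d) + k * k * (-1 / d) = (l * (d + 1) - k ^ 2) / d := by
    field_simp; ring
  have hden : k * (1 - -1 / d) + k ^ 2 * (-1 / d) = k * (d + 1 - k) / d := by
    field_simp; ring
  have hdiff : l - k ^ 2 / (d + 1) = (l * (d + 1) - k ^ 2) / (d + 1) := by
    field_simp
  rw [hnum, hden, div_div_div_cancel_right₀ hd.ne', hdiff, abs_div, abs_div,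
    abs_of_nonneg (mul_nonneg hk₀ (sub_nonneg.2 hk)), abs_of_pos (by linarith : 0 < d + 1)]
  field_simp

theorem coherence_normalized_sums_general (d k l : ℕ) (hd : 0 < d)
    (f : Fin (d + 1) → EuclideanSpace ℝ (Fin d))
    (hnorm : ∀ i, ‖f i‖ = 1)
    (hangle : ∀ i j, i ≠ j → (inner ℝ (f i) (f j) : ℝ) = -1 / d)
    (Λ₁ Λ₂ : Finset (Fin (d + 1)))
    (hcard₁ : Λ₁.card = k) (hcard₂ : Λ₂.card = k) (hl : (Λ₁ ∩ Λ₂).card = l)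
    (g₁ g₂ : EuclideanSpace ℝ (Fin d))
    (hg₁ : g₁ = ‖∑ j ∈ Λ₁, f j‖⁻¹ • ∑ j ∈ Λ₁, f j)
    (hg₂ : g₂ = ‖∑ j ∈ Λ₂, f j‖⁻¹ • ∑ j ∈ Λ₂, f j) :
    |(inner ℝ g₁ g₂ : ℝ)| =
      (((d : ℝ) + 1) / (k * ((d : ℝ) + 1 - k))) * |(l : ℝ) - (k : ℝ) ^ 2 / ((d : ℝ) + 1)| := by
  have hsq₁ := norm_sq_sum_of_equiangular hnorm hangle Λ₁
  have hsq₂ := norm_sq_sum_of_equiangular hnorm hangle Λ₂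
  rw [hcard₁] at hsq₁
  rw [hcard₂] at hsq₂
  have hnorm_eq : ‖∑ j ∈ Λ₁, f j‖ = ‖∑ j ∈ Λ₂, f j‖ :=
    (pow_left_inj₀ (norm_nonneg _) (norm_nonneg _) two_ne_zero).1 (hsq₁.trans hsq₂.symm)
  have hk : (k : ℝ) ≤ d + 1 := by
    exact_mod_cast hcard₁ ▸ (card_le_univ Λ₁).trans_eq (Fintype.card_fin _)
  rw [hg₁, hg₂, real_inner_inv_norm_smul_of_norm_eq hnorm_eq,
    inner_sum_sum_of_equiangular hnorm hangle, hsq₁, hcard₁, hcard₂, hl]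
  exact abs_simplex_gram_ratio (by exact_mod_cast hd) k.cast_nonneg hk

/-- Coherence between normalized sums over two size-`k` subsets of a simplex ETF with
intersection of size `l`: `|⟨g₁, g₂⟩| = ((d+1)/(k(d+1-k))) · |l - k²/(d+1)|`. -/
theorem coherence_normalized_sums (d k l : ℕ) (hd : 0 < d)
    (f : Fin (d + 1) → EuclideanSpace ℝ (Fin d))
    (hnorm : ∀ i, ‖f i‖ = 1)
    (hangle : ∀ i j, i ≠ j → (inner ℝ (f i) (f j) : ℝ) = -1 / d)
    (Λ₁ Λ₂ : Finset (Fin (d + 1))) (hk1 : 1 ≤ k) (hk2 : k ≤ d)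
    (hcard₁ : Λ₁.card = k) (hcard₂ : Λ₂.card = k) (hl : (Λ₁ ∩ Λ₂).card = l)
    (g₁ g₂ : EuclideanSpace ℝ (Fin d))
    (hg₁ : g₁ = ‖∑ j ∈ Λ₁, f j‖⁻¹ • ∑ j ∈ Λ₁, f j)
    (hg₂ : g₂ = ‖∑ j ∈ Λ₂, f j‖⁻¹ • ∑ j ∈ Λ₂, f j) :
    |(inner ℝ g₁ g₂ : ℝ)| =
      (((d : ℝ) + 1) / (k * ((d : ℝ) + 1 - k))) * |(l : ℝ) - (k : ℝ) ^ 2 / ((d : ℝ) + 1)| :=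
  coherence_normalized_sums_general d k l hd f hnorm hangle Λ₁ Λ₂ hcard₁ hcard₂ hl g₁ g₂ hg₁ hg₂
end

section
/- Let B be a (v, k, λ) block design with 2 ≤ k < v and b blocks. Then b ≥ v (Fisher's inequality). -/
open Finset

/-- Fisher's inequality: a `(v, k, λ)` block design with `2 ≤ k < v` and `λ ≥ 1`
has at least `v` blocks. -/
theorem fisher_inequality (v b k lam : ℕ) (hk : 2 ≤ k) (hkv : k < v) (hlam : 1 ≤ lam)
    (B : Fin b → Finset (Fin v))
    (hBcard : ∀ i, (B i).card = k)
    (hpair : ∀ x y : Fin v, x ≠ y →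
      (Finset.univ.filter (fun i => x ∈ B i ∧ y ∈ B i)).card = lam) :
    v ≤ b := by
  classical
  set r : Fin v → ℕ := fun x => (Finset.univ.filter (fun i => x ∈ B i)).card with hr_def
  -- replication count identity: r x * (k-1) = lam * (v-1)
  have hr : ∀ x : Fin v, r x * (k - 1) = lam * (v - 1) := by
    intro x
    have key : ∑ y ∈ Finset.univ.erase x,
        (Finset.univ.filter (fun i => x ∈ B i ∧ y ∈ B i)).card = r x * (k - 1) := by
      have : ∀ y, (Finset.univ.filter (fun i => x ∈ B i ∧ y ∈ B i)).card
          = ∑ i : Fin b, if x ∈ B i ∧ y ∈ B i then 1 else 0 := by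
        intro y; rw [Finset.card_filter]
      rw [Finset.sum_congr rfl (fun y _ => this y), Finset.sum_comm]
      have : ∀ i : Fin b, (∑ y ∈ Finset.univ.erase x, if x ∈ B i ∧ y ∈ B i then 1 else 0)
          = if x ∈ B i then k - 1 else 0 := by
        intro i
        by_cases hx : x ∈ B i
        · simp only [hx, true_and, if_pos]
          rw [← Finset.card_filter]
          have : (Finset.univ.erase x).filter (fun y => y ∈ B i) = (B i).erase x := by
            ext y; simp [Finset.mem_erase, and_comm]
          rw [this, Finset.card_erase_of_mem hx, hBcard]
        · simp [hx]
      rw [Finset.sum_congr rfl (fun i _ => this i)]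
      rw [← Finset.sum_filter, Finset.sum_const, smul_eq_mul]
    have key2 : ∑ y ∈ Finset.univ.erase x,
        (Finset.univ.filter (fun i => x ∈ B i ∧ y ∈ B i)).card = (v - 1) * lam := by
      rw [Finset.sum_congr rfl (fun y hy => hpair x y (Ne.symm (Finset.mem_erase.mp hy).1))]
      simp [Finset.card_erase_of_mem, mul_comm]
    rw [← key, key2, Nat.mul_comm]
  -- incidence vectors
  set e : Fin v → (Fin b → ℚ) := fun x i => if x ∈ B i then 1 else 0 with he_def
  have hdot : ∀ x y : Fin v, (∑ i : Fin b, e x i * e y i)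
      = if x = y then (r x : ℚ) else (lam : ℚ) := by
    intro x y
    have : ∀ i : Fin b, e x i * e y i = if x ∈ B i ∧ y ∈ B i then 1 else 0 := by
      intro i; by_cases h1 : x ∈ B i <;> by_cases h2 : y ∈ B i <;> simp [he_def, h1, h2]
    rw [Finset.sum_congr rfl (fun i _ => this i)]
    by_cases hxy : x = y
    · subst hxy
      rw [if_pos rfl]
      have h2 : ∀ i : Fin b, (if x ∈ B i ∧ x ∈ B i then (1:ℚ) else 0)
          = if x ∈ B i then 1 else 0 := fun i => by simp
      rw [Finset.sum_congr rfl (fun i _ => h2 i), Finset.sum_boole]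
    · rw [if_neg hxy]
      have := hpair x y hxy
      rw [← this, Finset.sum_boole]
  have hli : LinearIndependent ℚ e := by
    rw [Fintype.linearIndependent_iff]
    intro c hc
    set S : ℚ := ∑ x : Fin v, c x with hS
    -- for each y: c y * r y + lam * (S - c y) = 0
    have heq : ∀ y : Fin v, c y * (r y : ℚ) + (lam : ℚ) * (S - c y) = 0 := by
      intro y
      have h0 : ∑ i : Fin b, (∑ x : Fin v, c x * e x i) * e y i = 0 := by
        have : ∀ i : Fin b, (∑ x : Fin v, c x * e x i) = 0 := by
          intro i; have := congrFun hc i; simpa using this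
        simp [this]
      rw [Finset.sum_congr rfl (fun i _ => by rw [Finset.sum_mul]), Finset.sum_comm] at h0
      have h1 : ∀ x : Fin v, (∑ i : Fin b, c x * e x i * e y i)
          = c x * (if x = y then (r x : ℚ) else (lam : ℚ)) := by
        intro x
        rw [← hdot x y, Finset.mul_sum]
        exact Finset.sum_congr rfl (fun i _ => by ring)
      rw [Finset.sum_congr rfl (fun x _ => h1 x)] at h0
      have h2 : ∑ x : Fin v, c x * (if x = y then (r x : ℚ) else (lam : ℚ))
          = c y * (r y : ℚ) + (lam : ℚ) * (S - c y) := by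
        rw [← Finset.add_sum_erase _ _ (Finset.mem_univ y)]
        simp only [if_pos rfl]
        congr 1
        rw [Finset.sum_congr rfl (fun x hx => by
          rw [if_neg (Finset.mem_erase.mp hx).1]), ← Finset.sum_mul]
        rw [Finset.sum_erase_eq_sub (Finset.mem_univ y), ← hS]
        ring
      rw [h2] at h0; exact h0
    -- multiply by (k-1) and use hr to get c y * (v - k) = - S * (k-1)
    have hk1 : (1:ℚ) ≤ (k:ℚ) := by exact_mod_cast Nat.one_le_of_lt hk
    have hlam' : (0:ℚ) < (lam:ℚ) := by exact_mod_cast hlam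
    have hrc : ∀ y : Fin v, (r y : ℚ) * ((k:ℚ) - 1) = (lam:ℚ) * ((v:ℚ) - 1) := by
      intro y
      have := hr y
      have h1 : ((r y * (k-1) : ℕ) : ℚ) = ((lam * (v-1) : ℕ) : ℚ) := by exact_mod_cast this
      push_cast [Nat.cast_sub (by omega : 1 ≤ k), Nat.cast_sub (by omega : 1 ≤ v)] at h1
      linarith [h1]
    have heq2 : ∀ y : Fin v, c y * ((v:ℚ) - k) = - S * ((k:ℚ) - 1) := by
      intro y
      have h0 := heq y
      have h1 : (c y * (r y : ℚ) + (lam : ℚ) * (S - c y)) * ((k:ℚ)-1) = 0 := by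
        rw [h0]; ring
      have h2 : c y * ((r y : ℚ) * ((k:ℚ)-1)) + (lam : ℚ) * (S - c y) * ((k:ℚ)-1) = 0 := by
        linarith [h1, mul_comm (c y) ((r y : ℚ))]
      rw [hrc y] at h2
      have h3 : (lam:ℚ) * (c y * ((v:ℚ) - k) + S * ((k:ℚ)-1)) = 0 := by ring_nf; ring_nf at h2; linarith
      have h4 := mul_eq_zero.mp h3
      rcases h4 with h4 | h4
      · exact absurd h4 (ne_of_gt hlam')
      · linarith
    have hSsum : S * ((v:ℚ) - k) = - S * ((k:ℚ)-1) * v := by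
      have : ∑ y : Fin v, c y * ((v:ℚ) - k) = ∑ y : Fin v, - S * ((k:ℚ)-1) := by
        exact Finset.sum_congr rfl (fun y _ => heq2 y)
      rw [← Finset.sum_mul, ← hS] at this
      simpa [mul_comm] using this
    have hS0 : S = 0 := by
      have hv : (0:ℚ) < (v:ℚ) - k := by
        have : (k:ℚ) < (v:ℚ) := by exact_mod_cast hkv
        linarith
      have hfac : S * (((v:ℚ) - k) + ((k:ℚ)-1) * v) = 0 := by linarith [hSsum]
      have hpos : (0:ℚ) < ((v:ℚ) - k) + ((k:ℚ)-1) * v := by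
        have hv0 : (0:ℚ) ≤ (v:ℚ) := Nat.cast_nonneg v
        nlinarith
      rcases mul_eq_zero.mp hfac with h | h
      · exact h
      · linarith
    intro y
    have := heq2 y
    rw [hS0] at this
    have hv : (0:ℚ) < (v:ℚ) - k := by
      have : (k:ℚ) < (v:ℚ) := by exact_mod_cast hkv
      linarith
    have : c y * ((v:ℚ) - k) = 0 := by linarith [this]
    rcases mul_eq_zero.mp this with h | h
    · exact h
    · linarith
  have := hli.fintype_card_le_finrank
  simpa [Module.finrank_fintype_fun_eq_card] using this
end

section
/- Let {f_i}_{i=1}^{d+1} ⊂ R^d be a simplex ETF with ⟨f_i, f_j⟩ = -1/d for i ≠ j, and let B = {B_i}_{i=1}^{b} be a (d+1, k, λ) block design on {1, ..., d+1} with 2 ≤ k ≤ d. Define g_i = (Σ_{j∈B_i} f_j)/||Σ_{j∈B_i} f_j||. Then {g_i}_{i=1}^{b} is a unit norm tight frame for R^d, i.e., Σ_{i=1}^{b} |⟨f, g_i⟩|^2 = (b/d)||f||^2 for all f ∈ R^d. -/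
/-!
Vectors with Gram matrix `(1 + 1/d) I - (1/d) J` sum to zero, and any `d` of them form a basis,
so the frame operator `x ↦ ∑ ⟪x, f i⟫ f i`, which scales every `f j` by `(d + 1)/d`, is that
scalar. For blocks of a 2-design, `∑ᵢ (∑_{j ∈ Bᵢ} a j)² = λ (∑ a)² + (r - λ) ∑ a²` for every `a`;
with `a j = ⟪x, f j⟫` the first term vanishes. Each block sum has squared norm `k (d + 1 - k)/d`,
and the counting identities `r (k - 1) = λ d`, `b k = (d + 1) r` turn the bound into `b / d`.
-/

open Finset
open scoped RealInnerProductSpace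

section Gram

variable {ι E : Type*} [Fintype ι] [DecidableEq ι] [NormedAddCommGroup E] [InnerProductSpace ℝ E]
  {f : ι → E} {μ : ℝ}

theorem inner_sum_smul_of_gram (hf : ∀ i j, ⟪f i, f j⟫ = if i = j then 1 else μ)
    (c : ι → ℝ) (j : ι) : ⟪f j, ∑ i, c i • f i⟫ = (1 - μ) * c j + μ * ∑ i, c i := by
  have hterm : ∀ i, c i * ⟪f j, f i⟫ = μ * c i + if j = i then (1 - μ) * c i else 0 := by
    intro i
    rw [hf]
    split_ifs <;> ring
  simp only [inner_sum, real_inner_smul_right, hterm, sum_add_distrib, sum_ite_eq, mem_univ,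
    if_true, mul_sum]
  ring

theorem norm_sum_sq_of_gram (hf : ∀ i j, ⟪f i, f j⟫ = if i = j then 1 else μ) (s : Finset ι) :
    ‖∑ i ∈ s, f i‖ ^ 2 = #s * (1 + (#s - 1) * μ) := by
  have hs : ∑ i ∈ s, f i = ∑ i, (if i ∈ s then 1 else 0 : ℝ) • f i := by
    simp [ite_smul, sum_ite_mem]
  rw [← real_inner_self_eq_norm_sq, sum_inner, hs]
  simp only [inner_sum_smul_of_gram hf]
  rw [sum_congr rfl fun j hj => by rw [if_pos hj], sum_boole, filter_mem_eq_inter, univ_inter,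
    sum_const, nsmul_eq_mul]
  ring

end Gram

section Simplex

variable {E : Type*} [NormedAddCommGroup E] [InnerProductSpace ℝ E] {d : ℕ}
  {f : Fin (d + 1) → E}

theorem sum_eq_zero_of_simplex (hd : 0 < d)
    (hf : ∀ i j, ⟪f i, f j⟫ = if i = j then 1 else -1 / (d : ℝ)) : ∑ i, f i = 0 := by
  have hd' : (d : ℝ) ≠ 0 := by positivity
  rw [← norm_eq_zero, ← sq_eq_zero_iff, norm_sum_sq_of_gram hf, card_univ, Fintype.card_fin]
  push_cast
  field_simp
  ring

theorem norm_sum_sq_of_simplex (hd : 0 < d)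
    (hf : ∀ i j, ⟪f i, f j⟫ = if i = j then 1 else -1 / (d : ℝ)) (s : Finset (Fin (d + 1))) :
    ‖∑ i ∈ s, f i‖ ^ 2 = #s * (d + 1 - #s) / d := by
  rw [norm_sum_sq_of_gram hf]
  field_simp
  ring

theorem linearIndependent_castSucc_of_simplex (hd : 0 < d)
    (hf : ∀ i j, ⟪f i, f j⟫ = if i = j then 1 else -1 / (d : ℝ)) :
    LinearIndependent ℝ fun j : Fin d => f j.castSucc := by
  rw [Fintype.linearIndependent_iff]
  intro c hc
  -- Extend `c` by `0` at `last`: pairing the relation with each `f i` forces all coefficients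
  -- to be equal, hence zero.
  set c' : Fin (d + 1) → ℝ := Fin.lastCases 0 c
  have hc' : ∑ i, c' i • f i = 0 := by simpa [Fin.sum_univ_castSucc, c'] using hc
  have hcoef : ∀ i, (1 + 1 / d) * c' i = 1 / d * ∑ i, c' i := by
    intro i
    have := inner_sum_smul_of_gram hf c' i
    rw [hc', inner_zero_right] at this
    linear_combination -this
  have hsum : ∑ i, c' i = 0 := by
    simpa [c', hd.ne'] using hcoef (Fin.last d)
  intro j
  have := hcoef j.castSucc
  rw [hsum, mul_zero] at this
  simpa [c'] using (mul_eq_zero.mp this).resolve_left (by positivity)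

theorem sum_inner_sq_of_simplex (hd : 0 < d) (hE : Module.finrank ℝ E = d)
    (hf : ∀ i j, ⟪f i, f j⟫ = if i = j then 1 else -1 / (d : ℝ)) (x : E) :
    ∑ i, ⟪x, f i⟫ ^ 2 = (d + 1) / d * ‖x‖ ^ 2 := by
  have : Nonempty (Fin d) := ⟨⟨0, hd⟩⟩
  let b := basisOfLinearIndependentOfCardEqFinrank (linearIndependent_castSucc_of_simplex hd hf)
    (by rw [Fintype.card_fin, hE])
  have hframe : ∑ i, ⟪x, f i⟫ • f i = (1 + 1 / d : ℝ) • x := by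
    refine InnerProductSpace.ext_inner_left_basis b fun j => ?_
    rw [coe_basisOfLinearIndependentOfCardEqFinrank, inner_sum_smul_of_gram hf,
      ← inner_sum, sum_eq_zero_of_simplex hd hf, inner_zero_right, real_inner_smul_right,
      real_inner_comm]
    ring
  have := congrArg (⟪x, ·⟫) hframe
  simp only [inner_sum, real_inner_smul_right, real_inner_self_eq_norm_sq, ← sq] at this
  rw [this]
  field_simp

end Simplex

section BlockDesign

variable {α β : Type*} [Fintype α] [DecidableEq α] [Fintype β] {B : β → Finset α} {k r lam : ℕ}

theorem card_filter_mem_mul_pred (hB : ∀ i, #(B i) = k)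
    (hpair : ∀ x y, x ≠ y → #{i | x ∈ B i ∧ y ∈ B i} = lam) (x : α) :
    #{i | x ∈ B i} * (k - 1) = (Fintype.card α - 1) * lam := by
  have := card_mul_eq_card_mul (fun i y => y ∈ B i) (s := {i | x ∈ B i}) (t := univ.erase x)
    (m := k - 1) (n := lam) ?_ ?_
  · simpa [card_erase_of_mem] using this
  · intro i hi
    have : (univ.erase x).bipartiteAbove (fun i y => y ∈ B i) i = (B i).erase x := by
      ext y; simp [mem_bipartiteAbove, and_comm]
    rw [this, card_erase_of_mem (mem_filter.mp hi).2, hB]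
  · intro y hy
    rw [← hpair x y (ne_of_mem_erase hy).symm, bipartiteBelow, filter_filter]

theorem card_mul_eq_card_mul_of_regular (hB : ∀ i, #(B i) = k)
    (hr : ∀ x, #{i | x ∈ B i} = r) : Fintype.card β * k = Fintype.card α * r :=
  card_mul_eq_card_mul (fun i x => x ∈ B i) (s := univ) (t := univ)
    (fun i _ => by simpa [bipartiteAbove] using hB i) (fun x _ => hr x)

theorem exists_card_filter_mem_eq [Nonempty α] (hk : 2 ≤ k) (hB : ∀ i, #(B i) = k)
    (hpair : ∀ x y, x ≠ y → #{i | x ∈ B i ∧ y ∈ B i} = lam) :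
    ∃ r, (∀ x, #{i | x ∈ B i} = r) ∧ r * (k - 1) = (Fintype.card α - 1) * lam ∧
      Fintype.card β * k = Fintype.card α * r := by
  obtain ⟨x₀⟩ := ‹Nonempty α›
  have hrep := card_filter_mem_mul_pred hB hpair
  have hr : ∀ x, #{i | x ∈ B i} = #{i | x₀ ∈ B i} := fun x =>
    Nat.eq_of_mul_eq_mul_right (by omega) ((hrep x).trans (hrep x₀).symm)
  exact ⟨_, hr, hrep x₀, card_mul_eq_card_mul_of_regular hB hr⟩

theorem sum_sq_sum_eq_sum_sum_card_mul (a : α → ℝ) :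
    ∑ i, (∑ x ∈ B i, a x) ^ 2 = ∑ x, ∑ y, (#{i | x ∈ B i ∧ y ∈ B i} : ℝ) * (a x * a y) := by
  have hsq : ∀ i, (∑ x ∈ B i, a x) ^ 2 =
      ∑ x, ∑ y, if x ∈ B i ∧ y ∈ B i then a x * a y else 0 := by
    intro i
    simp only [sq, sum_mul_sum, ite_and, ← sum_ite_mem_eq (B i)]
    refine sum_congr rfl fun x _ => ?_
    split_ifs <;> simp
  simp only [hsq, card_filter, Nat.cast_sum, Nat.cast_ite, Nat.cast_one, Nat.cast_zero, sum_mul,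
    boole_mul]
  rw [sum_comm]
  exact sum_congr rfl fun x _ => sum_comm

theorem sum_sq_sum_of_pairwise_balanced (hr : ∀ x, #{i | x ∈ B i} = r)
    (hpair : ∀ x y, x ≠ y → #{i | x ∈ B i ∧ y ∈ B i} = lam) (a : α → ℝ) :
    ∑ i, (∑ x ∈ B i, a x) ^ 2 = lam * (∑ x, a x) ^ 2 + (r - lam) * ∑ x, a x ^ 2 := by
  have hcount : ∀ x y,
      (#{i | x ∈ B i ∧ y ∈ B i} : ℝ) = lam + if x = y then (r - lam : ℝ) else 0 := by
    intro x y
    by_cases h : x = y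
    · simp [h, hr]
    · simp [h, hpair x y h]
  rw [sum_sq_sum_eq_sum_sum_card_mul]
  simp only [hcount, add_mul, sum_add_distrib, ite_mul, zero_mul, sum_ite_eq, mem_univ, if_true]
  rw [sq, sum_mul_sum]
  simp only [sq, mul_sum]

end BlockDesign

theorem block_design_untf_general (d b k lam : ℕ) (hd : 0 < d) (hk : 2 ≤ k) (hkd : k ≤ d)
    (f : Fin (d + 1) → EuclideanSpace ℝ (Fin d))
    (hnorm : ∀ i, ‖f i‖ = 1)
    (hangle : ∀ i j, i ≠ j → (inner ℝ (f i) (f j) : ℝ) = -1 / d)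
    (B : Fin b → Finset (Fin (d + 1)))
    (hBcard : ∀ i, (B i).card = k)
    (hpair : ∀ x y : Fin (d + 1), x ≠ y →
      (Finset.univ.filter (fun i => x ∈ B i ∧ y ∈ B i)).card = lam)
    (g : Fin b → EuclideanSpace ℝ (Fin d))
    (hg : ∀ i, g i = ‖∑ j ∈ B i, f j‖⁻¹ • ∑ j ∈ B i, f j) :
    (∀ i, ‖g i‖ = 1) ∧
    ∀ x : EuclideanSpace ℝ (Fin d),
      ∑ i : Fin b, |(inner ℝ x (g i) : ℝ)| ^ 2 = ((b : ℝ) / d) * ‖x‖ ^ 2 := by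
  have hf : ∀ i j, ⟪f i, f j⟫ = if i = j then 1 else -1 / (d : ℝ) := by
    intro i j
    split_ifs with h
    · rw [h, real_inner_self_eq_norm_sq, hnorm, one_pow]
    · exact hangle i j h
  obtain ⟨r, hr, hrep, hbk⟩ := exists_card_filter_mem_eq hk hBcard hpair
  simp only [Fintype.card_fin, add_tsub_cancel_right] at hrep hbk
  set C : ℝ := k * (d + 1 - k) / d
  have hkd' : (0 : ℝ) < d + 1 - k := by
    have : (k : ℝ) ≤ d := by exact_mod_cast hkd
    linarith
  have hC : 0 < C := by positivity
  have hnormS : ∀ i, ‖∑ j ∈ B i, f j‖ ^ 2 = C := fun i => by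
    rw [norm_sum_sq_of_simplex hd hf, hBcard]
  have hS : ∀ i, ∑ j ∈ B i, f j ≠ 0 := fun i hi => by
    simpa [hi, hC.ne] using hnormS i
  refine ⟨fun i => hg i ▸ norm_smul_inv_norm (hS i), fun x => ?_⟩
  have hterm : ∀ i, |⟪x, g i⟫| ^ 2 = (∑ j ∈ B i, ⟪x, f j⟫) ^ 2 / C := fun i => by
    rw [hg i, real_inner_smul_right, sq_abs, mul_pow, inv_pow, hnormS, inner_sum]
    ring
  simp only [hterm, ← sum_div]
  rw [sum_sq_sum_of_pairwise_balanced hr hpair, ← inner_sum, sum_eq_zero_of_simplex hd hf,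
    inner_zero_right, sum_inner_sq_of_simplex hd finrank_euclideanSpace_fin hf x]
  have hrR : (r : ℝ) * (k - 1) = d * lam := by
    rw [← Nat.cast_one, ← Nat.cast_sub (by omega)]
    exact_mod_cast hrep
  have hbkR : (b : ℝ) * k = (d + 1) * r := by exact_mod_cast hbk
  simp only [C]
  field_simp
  linear_combination (d + 1) * ‖x‖ ^ 2 * hrR - ‖x‖ ^ 2 * (d + 1 - k) * hbkR

/-- Normalized block sums of a simplex ETF over a `(d+1, k, λ)` block design form a
unit norm tight frame of `b` vectors for `ℝ^d`. -/
theorem block_design_untf (d b k lam : ℕ) (hd : 0 < d) (hk : 2 ≤ k) (hkd : k ≤ d)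
    (hlam : 0 < lam)
    (f : Fin (d + 1) → EuclideanSpace ℝ (Fin d))
    (hnorm : ∀ i, ‖f i‖ = 1)
    (hangle : ∀ i j, i ≠ j → (inner ℝ (f i) (f j) : ℝ) = -1 / d)
    (B : Fin b → Finset (Fin (d + 1)))
    (hBcard : ∀ i, (B i).card = k)
    (hpair : ∀ x y : Fin (d + 1), x ≠ y →
      (Finset.univ.filter (fun i => x ∈ B i ∧ y ∈ B i)).card = lam)
    (g : Fin b → EuclideanSpace ℝ (Fin d))
    (hg : ∀ i, g i = ‖∑ j ∈ B i, f j‖⁻¹ • ∑ j ∈ B i, f j) :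
    (∀ i, ‖g i‖ = 1) ∧
    ∀ x : EuclideanSpace ℝ (Fin d),
      ∑ i : Fin b, |(inner ℝ x (g i) : ℝ)| ^ 2 = ((b : ℝ) / d) * ‖x‖ ^ 2 :=
  block_design_untf_general d b k lam hd hk hkd f hnorm hangle B hBcard hpair g hg
end

section
/- Let B be a (v, k, λ) block design with replication number r, and let σ = k - r + λ and Σ = 2kλ/r - (k - r + λ). Then for any two distinct blocks B_i, B_j of B, σ ≤ |B_i ∩ B_j| ≤ Σ; moreover |B_i ∩ B_j| ≥ k(2k - v)/v. -/
private lemma sum_ite_univ {v : ℕ} (s : Finset (Fin v)) (f : Fin v → ℝ) :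
    ∑ p : Fin v, (if p ∈ s then f p else 0) = ∑ p ∈ s, f p := by
  rw [Finset.sum_ite_mem, Finset.univ_inter]

private lemma master_bilinear (v b lam r : ℕ)
    (B : Fin b → Finset (Fin v))
    (hr : ∀ x : Fin v, (Finset.univ.filter (fun i => x ∈ B i)).card = r)
    (hpair : ∀ x y : Fin v, x ≠ y →
      (Finset.univ.filter (fun i => x ∈ B i ∧ y ∈ B i)).card = lam)
    (u w : Fin v → ℝ) :
    ∑ m : Fin b, (∑ p ∈ B m, u p) * (∑ q ∈ B m, w q)
      = ((r : ℝ) - lam) * (∑ p : Fin v, u p * w p)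
        + lam * (∑ p : Fin v, u p) * (∑ q : Fin v, w q) := by
  have step1 : ∀ m : Fin b, (∑ p ∈ B m, u p) * (∑ q ∈ B m, w q)
      = ∑ p : Fin v, ∑ q : Fin v, if p ∈ B m ∧ q ∈ B m then u p * w q else 0 := by
    intro m
    rw [Finset.sum_mul_sum, ← sum_ite_univ (B m) (fun p => ∑ q ∈ B m, u p * w q)]
    refine Finset.sum_congr rfl fun p _ => ?_
    by_cases hp : p ∈ B m
    · simp only [hp, if_true, true_and]
      rw [← sum_ite_univ (B m) (fun q => u p * w q)]
    · simp [hp]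
  calc ∑ m : Fin b, (∑ p ∈ B m, u p) * (∑ q ∈ B m, w q)
      = ∑ m : Fin b, ∑ p : Fin v, ∑ q : Fin v,
          if p ∈ B m ∧ q ∈ B m then u p * w q else 0 :=
        Finset.sum_congr rfl fun m _ => step1 m
    _ = ∑ p : Fin v, ∑ q : Fin v, ∑ m : Fin b,
          if p ∈ B m ∧ q ∈ B m then u p * w q else 0 := by
        rw [Finset.sum_comm]
        exact Finset.sum_congr rfl fun p _ => Finset.sum_comm
    _ = ∑ p : Fin v, ∑ q : Fin v, (if p = q then (r : ℝ) else lam) * (u p * w q) := by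
        refine Finset.sum_congr rfl fun p _ => Finset.sum_congr rfl fun q _ => ?_
        rw [← Finset.sum_filter, Finset.sum_const, nsmul_eq_mul]
        have hc : (Finset.univ.filter (fun m => p ∈ B m ∧ q ∈ B m)).card
            = if p = q then r else lam := by
          by_cases hpq : p = q
          · subst hpq
            rw [if_pos rfl, ← hr p]
            congr 1
            ext m
            simp
          · rw [if_neg hpq]
            exact hpair p q hpq
        rw [hc]
        by_cases hpq : p = q <;> simp [hpq]
    _ = ((r : ℝ) - lam) * (∑ p : Fin v, u p * w p)
        + lam * (∑ p : Fin v, u p) * (∑ q : Fin v, w q) := by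
        have expand : ∀ p q : Fin v, (if p = q then (r : ℝ) else lam) * (u p * w q)
            = (if p = q then ((r : ℝ) - lam) * (u p * w q) else 0)
              + lam * (u p * w q) := by
          intro p q; split_ifs <;> ring
        simp_rw [expand, Finset.sum_add_distrib]
        congr 1
        · rw [Finset.mul_sum]
          refine Finset.sum_congr rfl fun p _ => ?_
          rw [Finset.sum_ite_eq]
          simp
        · rw [mul_assoc, Finset.sum_mul_sum, Finset.mul_sum]
          exact Finset.sum_congr rfl fun p _ => by rw [Finset.mul_sum]

set_option maxHeartbeats 2000000 in
/-- Majumdar/Beutelspacher bounds on the intersection numbers of a `(v, k, λ)` block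
design with replication number `r`: for distinct blocks `B_i, B_j`,
`k - r + λ ≤ |B_i ∩ B_j| ≤ 2kλ/r - (k - r + λ)`, and also
`k(2k - v)/v ≤ |B_i ∩ B_j|`. -/
theorem block_intersection_bounds (v b k lam r : ℕ) (hk : 2 ≤ k) (hkv : k ≤ v)
    (hlam : 0 < lam)
    (B : Fin b → Finset (Fin v))
    (hBcard : ∀ i, (B i).card = k)
    (hr : ∀ x : Fin v, (Finset.univ.filter (fun i => x ∈ B i)).card = r)
    (hpair : ∀ x y : Fin v, x ≠ y →
      (Finset.univ.filter (fun i => x ∈ B i ∧ y ∈ B i)).card = lam)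
    (i j : Fin b) (hij : i ≠ j) :
    ((k : ℝ) - r + lam ≤ ((B i ∩ B j).card : ℝ)) ∧
    (((B i ∩ B j).card : ℝ) ≤ 2 * k * lam / r - ((k : ℝ) - r + lam)) ∧
    ((k : ℝ) * (2 * k - v) / v ≤ ((B i ∩ B j).card : ℝ)) := by
  classical
  set μ : ℝ := ((B i ∩ B j).card : ℝ) with hμdef
  have hv2 : 2 ≤ v := le_trans hk hkv
  have hv0R : (0 : ℝ) < v := by exact_mod_cast lt_of_lt_of_le two_pos hv2
  have hkR : (2 : ℝ) ≤ k := by exact_mod_cast hk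
  have hkvR : (k : ℝ) ≤ v := by exact_mod_cast hkv
  have hlamR : (1 : ℝ) ≤ lam := by exact_mod_cast hlam
  have hμ0 : 0 ≤ μ := by positivity
  have hμk : μ ≤ k := by
    have h1 : (B i ∩ B j).card ≤ (B i).card :=
      Finset.card_le_card Finset.inter_subset_left
    rw [hBcard i] at h1
    rw [hμdef]; exact_mod_cast h1
  -- r ≥ 1
  have hr1 : 1 ≤ r := by
    obtain ⟨x, hx⟩ : (B i).Nonempty := by
      rw [← Finset.card_pos, hBcard]; omega
    rw [← hr x]
    exact Finset.card_pos.2 ⟨i, by simp [hx]⟩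
  have hr0R : (0 : ℝ) < r := by exact_mod_cast lt_of_lt_of_le one_pos hr1
  -- basic sums
  have hBk : ∀ l, ∑ _p ∈ B l, (1 : ℝ) = k := fun l => by
    rw [Finset.sum_const, hBcard l, nsmul_eq_mul, mul_one]
  have hInt : ∑ p ∈ B i, (if p ∈ B j then (1 : ℝ) else 0) = μ := by
    rw [Finset.sum_ite_mem, Finset.sum_const, nsmul_eq_mul, mul_one, hμdef]
  have hInt' : ∑ p ∈ B j, (if p ∈ B i then (1 : ℝ) else 0) = μ := by
    rw [Finset.sum_ite_mem, Finset.sum_const, nsmul_eq_mul, mul_one, hμdef,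
      Finset.inter_comm]
  have hχi : ∑ p : Fin v, (if p ∈ B i then (1 : ℝ) else 0) = k := by
    rw [sum_ite_univ, hBk]
  have hχj : ∑ p : Fin v, (if p ∈ B j then (1 : ℝ) else 0) = k := by
    rw [sum_ite_univ, hBk]
  have hχij : ∑ p : Fin v, (if p ∈ B i ∩ B j then (1 : ℝ) else 0) = μ := by
    rw [sum_ite_univ, Finset.sum_const, nsmul_eq_mul, mul_one, hμdef]
  have hcardv : ∑ _p : Fin v, (1 : ℝ) = v := by
    rw [Finset.sum_const, Finset.card_univ, Fintype.card_fin, nsmul_eq_mul, mul_one]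
  -- dropping terms
  have hdrop : ∀ w : Fin v → ℝ,
      (∑ p ∈ B i, w p) * (∑ q ∈ B i, w q) + (∑ p ∈ B j, w p) * (∑ q ∈ B j, w q)
        ≤ ∑ m : Fin b, (∑ p ∈ B m, w p) * (∑ q ∈ B m, w q) := by
    intro w
    have h1 := Finset.sum_le_sum_of_subset_of_nonneg
      (f := fun m => (∑ p ∈ B m, w p) * (∑ q ∈ B m, w q))
      (Finset.subset_univ ({i, j} : Finset (Fin b)))
      (fun m _ _ => mul_self_nonneg _)
    rwa [Finset.sum_pair hij] at h1
  -- the relation lam * v = r*k - r + lam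
  have hL : (lam : ℝ) * v = r * k - r + lam := by
    have x0 : Fin v := ⟨0, by omega⟩
    have hm := master_bilinear v b lam r B hr hpair
      (fun p => if x0 = p then (1 : ℝ) else 0) (fun _ => (1 : ℝ))
    have e1 : ∀ m : Fin b, (∑ p ∈ B m, if x0 = p then (1 : ℝ) else 0)
        = if x0 ∈ B m then (1 : ℝ) else 0 := fun m => Finset.sum_ite_eq (B m) x0 _
    rw [Finset.sum_congr rfl (fun m _ => by rw [e1 m])] at hm
    have e2 : ∑ m : Fin b, (if x0 ∈ B m then (1 : ℝ) else 0) * (∑ _q ∈ B m, (1 : ℝ))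
        = r * k := by
      rw [Finset.sum_congr rfl (fun m _ => by rw [hBk m]), ← Finset.sum_mul,
        Finset.sum_boole, hr x0]
    rw [e2] at hm
    have e3 : ∑ p : Fin v, (if x0 = p then (1 : ℝ) else 0) * 1 = 1 := by
      simp only [mul_one]
      rw [Finset.sum_ite_eq]
      simp
    have e4 : ∑ p : Fin v, (if x0 = p then (1 : ℝ) else 0) = 1 := by
      rw [Finset.sum_ite_eq]; simp
    rw [e3, e4, hcardv] at hm
    linarith
  -- r ≥ lam
  have hrlR : (lam : ℝ) ≤ r := by
    nlinarith [hL, mul_nonneg (le_trans zero_le_one hlamR)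
      (sub_nonneg.2 hkvR), hkR]
  -- ===== lower bound =====
  have lower : (k : ℝ) - r + lam ≤ μ := by
    have hm₁ := master_bilinear v b lam r B hr hpair
      (fun p => (if p ∈ B i then (1 : ℝ) else 0) - (if p ∈ B j then 1 else 0))
      (fun p => (if p ∈ B i then (1 : ℝ) else 0) - (if p ∈ B j then 1 else 0))
    have hd₁ := hdrop
      (fun p => (if p ∈ B i then (1 : ℝ) else 0) - (if p ∈ B j then 1 else 0))
    rw [hm₁] at hd₁
    have hsi : (∑ p ∈ B i,
        ((if p ∈ B i then (1 : ℝ) else 0) - (if p ∈ B j then 1 else 0)))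
        = (k : ℝ) - μ := by
      rw [Finset.sum_sub_distrib, hInt]
      congr 1
      rw [Finset.sum_congr rfl (fun p hp => if_pos hp), hBk i]
    have hsj : (∑ p ∈ B j,
        ((if p ∈ B i then (1 : ℝ) else 0) - (if p ∈ B j then 1 else 0)))
        = μ - (k : ℝ) := by
      rw [Finset.sum_sub_distrib, hInt']
      congr 1
      rw [Finset.sum_congr rfl (fun p hp => if_pos hp), hBk j]
    have hS1 : (∑ p : Fin v,
        ((if p ∈ B i then (1 : ℝ) else 0) - (if p ∈ B j then 1 else 0))) = 0 := by
      rw [Finset.sum_sub_distrib, hχi, hχj, sub_self]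
    have hS2 : (∑ p : Fin v,
        ((if p ∈ B i then (1 : ℝ) else 0) - (if p ∈ B j then 1 else 0)) *
        ((if p ∈ B i then (1 : ℝ) else 0) - (if p ∈ B j then 1 else 0)))
        = 2 * (k : ℝ) - 2 * μ := by
      have hpt : ∀ p : Fin v,
          ((if p ∈ B i then (1 : ℝ) else 0) - (if p ∈ B j then 1 else 0)) *
          ((if p ∈ B i then (1 : ℝ) else 0) - (if p ∈ B j then 1 else 0))
          = (if p ∈ B i then (1 : ℝ) else 0) + (if p ∈ B j then 1 else 0)
            - 2 * (if p ∈ B i ∩ B j then 1 else 0) := by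
        intro p
        by_cases h1 : p ∈ B i <;> by_cases h2 : p ∈ B j <;>
          simp [Finset.mem_inter, h1, h2] <;> norm_num
      rw [Finset.sum_congr rfl (fun p _ => hpt p), Finset.sum_sub_distrib,
        Finset.sum_add_distrib, hχi, hχj, ← Finset.mul_sum, hχij]
      ring
    rw [hsi, hsj, hS1, hS2] at hd₁
    by_contra hcon
    push_neg at hcon
    have h5 : (0 : ℝ) < (k : ℝ) - μ := by linarith
    nlinarith [hd₁, mul_pos h5 (show (0 : ℝ) < (k : ℝ) - μ - ((r : ℝ) - lam) by linarith)]
  -- ===== upper bound =====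
  have upper : μ ≤ 2 * k * lam / r - ((k : ℝ) - r + lam) := by
    have hm₂ := master_bilinear v b lam r B hr hpair
      (fun p => (r : ℝ) * (if p ∈ B i then (1 : ℝ) else 0)
        + (r : ℝ) * (if p ∈ B j then 1 else 0) - 2 * lam)
      (fun p => (r : ℝ) * (if p ∈ B i then (1 : ℝ) else 0)
        + (r : ℝ) * (if p ∈ B j then 1 else 0) - 2 * lam)
    have hd₂ := hdrop
      (fun p => (r : ℝ) * (if p ∈ B i then (1 : ℝ) else 0)
        + (r : ℝ) * (if p ∈ B j then 1 else 0) - 2 * lam)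
    rw [hm₂] at hd₂
    have hsi2 : (∑ p ∈ B i, ((r : ℝ) * (if p ∈ B i then (1 : ℝ) else 0)
        + (r : ℝ) * (if p ∈ B j then 1 else 0) - 2 * lam))
        = (r : ℝ) * k + r * μ - 2 * lam * k := by
      have e : ∀ p ∈ B i, ((r : ℝ) * (if p ∈ B i then (1 : ℝ) else 0)
          + (r : ℝ) * (if p ∈ B j then 1 else 0) - 2 * lam)
          = ((r : ℝ) - 2 * lam) + (r : ℝ) * (if p ∈ B j then (1 : ℝ) else 0) := by
        intro p hp; rw [if_pos hp]; ring
      rw [Finset.sum_congr rfl e, Finset.sum_add_distrib, Finset.sum_const,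
        hBcard i, nsmul_eq_mul, ← Finset.mul_sum, hInt]
      ring
    have hsj2 : (∑ p ∈ B j, ((r : ℝ) * (if p ∈ B i then (1 : ℝ) else 0)
        + (r : ℝ) * (if p ∈ B j then 1 else 0) - 2 * lam))
        = (r : ℝ) * k + r * μ - 2 * lam * k := by
      have e : ∀ p ∈ B j, ((r : ℝ) * (if p ∈ B i then (1 : ℝ) else 0)
          + (r : ℝ) * (if p ∈ B j then 1 else 0) - 2 * lam)
          = ((r : ℝ) - 2 * lam) + (r : ℝ) * (if p ∈ B i then (1 : ℝ) else 0) := by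
        intro p hp; rw [if_pos hp]; ring
      rw [Finset.sum_congr rfl e, Finset.sum_add_distrib, Finset.sum_const,
        hBcard j, nsmul_eq_mul, ← Finset.mul_sum, hInt']
      ring
    have e0 : ∑ _p : Fin v, (2 * (lam : ℝ)) = 2 * lam * v := by
      rw [Finset.sum_const, Finset.card_univ, Fintype.card_fin, nsmul_eq_mul]
      ring
    have hS1b : (∑ p : Fin v, ((r : ℝ) * (if p ∈ B i then (1 : ℝ) else 0)
        + (r : ℝ) * (if p ∈ B j then 1 else 0) - 2 * lam))
        = 2 * (r : ℝ) - 2 * lam := by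
      rw [Finset.sum_sub_distrib, Finset.sum_add_distrib, ← Finset.mul_sum,
        ← Finset.mul_sum, hχi, hχj, e0]
      linarith [hL]
    have hS2b : (∑ p : Fin v, ((r : ℝ) * (if p ∈ B i then (1 : ℝ) else 0)
        + (r : ℝ) * (if p ∈ B j then 1 else 0) - 2 * lam) *
        ((r : ℝ) * (if p ∈ B i then (1 : ℝ) else 0)
        + (r : ℝ) * (if p ∈ B j then 1 else 0) - 2 * lam))
        = ((r : ℝ) * r - 4 * lam * r) * k + ((r : ℝ) * r - 4 * lam * r) * k
          + 2 * (r : ℝ) * r * μ + 4 * lam * ((r : ℝ) * k - r + lam) := by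
      have hpt : ∀ p : Fin v, ((r : ℝ) * (if p ∈ B i then (1 : ℝ) else 0)
          + (r : ℝ) * (if p ∈ B j then 1 else 0) - 2 * lam) *
          ((r : ℝ) * (if p ∈ B i then (1 : ℝ) else 0)
          + (r : ℝ) * (if p ∈ B j then 1 else 0) - 2 * lam)
          = ((r : ℝ) * r - 4 * lam * r) * (if p ∈ B i then (1 : ℝ) else 0)
            + ((r : ℝ) * r - 4 * lam * r) * (if p ∈ B j then (1 : ℝ) else 0)
            + 2 * (r : ℝ) * r * (if p ∈ B i ∩ B j then (1 : ℝ) else 0)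
            + 4 * lam * lam := by
        intro p
        by_cases h1 : p ∈ B i <;> by_cases h2 : p ∈ B j <;>
          simp [Finset.mem_inter, h1, h2] <;> ring
      rw [Finset.sum_congr rfl (fun p _ => hpt p), Finset.sum_add_distrib,
        Finset.sum_add_distrib, Finset.sum_add_distrib, ← Finset.mul_sum,
        ← Finset.mul_sum, ← Finset.mul_sum, hχi, hχj, hχij, Finset.sum_const,
        Finset.card_univ, Fintype.card_fin, nsmul_eq_mul]
      linear_combination 4 * (lam : ℝ) * hL
    rw [hsi2, hsj2, hS1b, hS2b] at hd₂
    have hgoal : μ * r ≤ 2 * (k : ℝ) * lam - ((k : ℝ) - r + lam) * r := by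
      by_contra hcon
      push_neg at hcon
      have h1 : 0 < μ * r - (2 * (k : ℝ) * lam - k * r + r * r - lam * r) := by
        nlinarith [hcon]
      have h2 : 0 < μ * r - (2 * (k : ℝ) * lam - k * r) := by
        nlinarith [h1, mul_nonneg hr0R.le (sub_nonneg.2 hrlR)]
      nlinarith [hd₂, mul_pos h1 h2]
    have h4 : (2 * (k : ℝ) * lam - ((k : ℝ) - r + lam) * r) / r
        = 2 * (k : ℝ) * lam / r - ((k : ℝ) - r + lam) := by
      field_simp
    rw [← h4]
    exact (le_div_iff₀ hr0R).2 hgoal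
  -- ===== third bound =====
  have third : (k : ℝ) * (2 * k - v) / v ≤ μ := by
    have hcu := Finset.card_union_add_card_inter (B i) (B j)
    rw [hBcard i, hBcard j] at hcu
    have hule : (B i ∪ B j).card ≤ v := by
      have h := Finset.card_le_univ (B i ∪ B j)
      rwa [Fintype.card_fin] at h
    have h2kv : 2 * (k : ℝ) - v ≤ μ := by
      have hn : (k + k : ℕ) ≤ v + (B i ∩ B j).card := by omega
      have hn2 := (Nat.cast_le (α := ℝ)).2 hn
      push_cast at hn2
      rw [hμdef]
      linarith
    rw [div_le_iff₀ hv0R]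
    rcases le_or_gt (2 * (k : ℝ)) (v : ℝ) with h | h
    · nlinarith [mul_nonneg hμ0 hv0R.le,
        mul_nonneg (show (0 : ℝ) ≤ k by linarith) (sub_nonneg.2 h)]
    · nlinarith [mul_le_mul_of_nonneg_right h2kv hv0R.le,
        mul_nonneg (sub_nonneg.2 h.le) (sub_nonneg.2 hkvR)]
  exact ⟨lower, upper, third⟩
end

section
/- Let {f_i}_{i=1}^{d+1} ⊂ R^d be a simplex ETF (⟨f_i, f_j⟩ = -1/d for i ≠ j), and let B = {B_i}_{i=1}^{b} be a (d+1, k, λ) block design on {1,...,d+1}. Define g_i = (Σ_{j∈B_i} f_j)/||Σ_{j∈B_i} f_j||. Then for all i ≠ j, |⟨g_i, g_j⟩| ≤ (d+1)λ/(k(k-1)) - 1. -/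
/-!
Write `s t = ∑ a ∈ B t, f a` for the block sums. Since every point lies in `r = dλ/(k-1)` blocks
and every pair in `λ`, and since the simplex sums to zero and satisfies
`∑ a, ⟪v, f a⟫ • f a = ((d+1)/d) • v` on its span, the block sums form an equal-norm tight frame:
`∑ t, ⟪v, s t⟫ • s t = A • v` with `A = (r - λ)(d+1)/d`. In such a frame, with `P = ‖s i‖²`,
testing the frame identity against `s i ± s j` and keeping only the terms `t = i, j` gives
`|⟪s i, s j⟫| ≤ A - P`; and `A / P - 1` is the stated bound, as `P = k(d+1-k)/d`.
-/

open Finset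
open scoped RealInnerProductSpace

section TightFrame

variable {E ι : Type*} [NormedAddCommGroup E] [InnerProductSpace ℝ E] [Fintype ι]
  {s : ι → E} {A : ℝ}

theorem abs_inner_le_of_sum_inner_smul_eq (hA : 0 ≤ A)
    (hframe : ∀ v ∈ Submodule.span ℝ (Set.range s), ∑ t, ⟪v, s t⟫ • s t = A • v)
    {i j : ι} (hij : i ≠ j) (hnorm : ‖s i‖ = ‖s j‖) :
    |⟪s i, s j⟫| ≤ A - ‖s i‖ ^ 2 := by
  classical
  set P := ‖s i‖ ^ 2
  set G := ⟪s i, s j⟫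
  have hPi : ⟪s i, s i⟫ = P := real_inner_self_eq_norm_sq _
  have hPj : ⟪s j, s j⟫ = P := by rw [real_inner_self_eq_norm_sq, ← hnorm]
  have key : ∀ c : ℝ, c ^ 2 = 1 → c * G ≤ A - P := by
    intro c hc
    set v := s i + c • s j
    have hv : v ∈ Submodule.span ℝ (Set.range s) :=
      add_mem (Submodule.subset_span ⟨i, rfl⟩)
        (Submodule.smul_mem _ _ (Submodule.subset_span ⟨j, rfl⟩))
    have hvi : ⟪v, s i⟫ = P + c * G := by
      rw [inner_add_left, real_inner_smul_left, hPi, real_inner_comm]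
    have hvj : ⟪v, s j⟫ = c * (P + c * G) := by
      rw [inner_add_left, real_inner_smul_left, hPj]
      linear_combination (-G) * hc
    have hvv : ⟪v, v⟫ = 2 * (P + c * G) := by
      rw [inner_add_right, real_inner_smul_right, hvi, hvj]
      linear_combination (P + c * G) * hc
    have hsq : ⟪v, s i⟫ ^ 2 + ⟪v, s j⟫ ^ 2 ≤ A * ⟪v, v⟫ := by
      calc ⟪v, s i⟫ ^ 2 + ⟪v, s j⟫ ^ 2 = ∑ t ∈ {i, j}, ⟪v, s t⟫ ^ 2 := by
            rw [sum_pair hij]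
        _ ≤ ∑ t, ⟪v, s t⟫ ^ 2 :=
          sum_le_sum_of_subset_of_nonneg (subset_univ _) fun _ _ _ ↦ sq_nonneg _
        _ = ⟪v, ∑ t, ⟪v, s t⟫ • s t⟫ := by simp only [inner_sum, real_inner_smul_right, sq]
        _ = A * ⟪v, v⟫ := by rw [hframe v hv, real_inner_smul_right]
    have hnonneg : 0 ≤ P + c * G := by nlinarith [real_inner_self_nonneg (x := v)]
    rw [hvi, hvj, hvv] at hsq
    nlinarith
  rw [abs_le]
  constructor <;> linarith [key 1 (by norm_num), key (-1) (by norm_num)]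

theorem abs_inner_normalize_le_of_sum_inner_smul_eq (hA : 0 ≤ A)
    (hframe : ∀ v ∈ Submodule.span ℝ (Set.range s), ∑ t, ⟪v, s t⟫ • s t = A • v)
    {i j : ι} (hij : i ≠ j) (hnorm : ‖s i‖ = ‖s j‖) (hs : s i ≠ 0) :
    |⟪‖s i‖⁻¹ • s i, ‖s j‖⁻¹ • s j⟫| ≤ A / ‖s i‖ ^ 2 - 1 := by
  have hpos : 0 < ‖s i‖ ^ 2 := by positivity
  rw [real_inner_smul_left, real_inner_smul_right, ← hnorm, ← mul_assoc, ← sq, inv_pow,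
    ← div_eq_inv_mul, abs_div, abs_of_pos hpos, div_le_iff₀ hpos, sub_mul, div_mul_cancel₀ _ hpos.ne',
    one_mul]
  exact abs_inner_le_of_sum_inner_smul_eq hA hframe hij hnorm

end TightFrame

section Simplex

variable {E ι : Type*} [NormedAddCommGroup E] [InnerProductSpace ℝ E] [Fintype ι] [DecidableEq ι]

structure IsSimplexETF (d : ℕ) (f : ι → E) : Prop where
  card_eq : Fintype.card ι = d + 1
  inner_eq : ∀ a b, ⟪f a, f b⟫ = if a = b then 1 else -1 / (d : ℝ)

namespace IsSimplexETF

variable {d : ℕ} {f : ι → E}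

theorem inner_eq_ite_sub (hf : IsSimplexETF d f) (a b : ι) :
    ⟪f a, f b⟫ = (if a = b then 1 + 1 / (d : ℝ) else 0) - 1 / d := by
  rw [hf.inner_eq]
  split_ifs <;> ring

theorem sum_eq_zero (hf : IsSimplexETF d f) (hd : d ≠ 0) : ∑ a, f a = 0 := by
  have hsum : ∀ a, ∑ b, ⟪f a, f b⟫ = 0 := by
    intro a
    simp only [hf.inner_eq_ite_sub, sum_sub_distrib, sum_ite_eq, mem_univ, if_true, sum_const,
      card_univ, hf.card_eq, nsmul_eq_mul]
    push_cast
    field_simp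
    ring
  rw [← inner_self_eq_zero (𝕜 := ℝ), sum_inner]
  simp only [inner_sum, hsum, sum_const_zero]

theorem sum_inner_smul_of_mem_span (hf : IsSimplexETF d f) (hd : d ≠ 0) {v : E}
    (hv : v ∈ Submodule.span ℝ (Set.range f)) :
    ∑ a, ⟪v, f a⟫ • f a = ((d + 1) / d : ℝ) • v := by
  induction hv using Submodule.span_induction with
  | mem _ hv =>
    obtain ⟨b, rfl⟩ := hv
    simp only [hf.inner_eq_ite_sub, sub_smul, sum_sub_distrib, ite_smul, zero_smul, sum_ite_eq,
      mem_univ, if_true, ← smul_sum, hf.sum_eq_zero hd, smul_zero, sub_zero]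
    congr 1
    field_simp
  | zero => simp
  | add x y _ _ hx hy =>
    simp only [inner_add_left, add_smul, sum_add_distrib, hx, hy, smul_add]
  | smul c x _ hx =>
    rw [← smul_comm c, ← hx]
    simp only [real_inner_smul_left, mul_smul, smul_sum]

theorem norm_sum_sq (hf : IsSimplexETF d f) (hd : d ≠ 0) (S : Finset ι) :
    ‖∑ a ∈ S, f a‖ ^ 2 = #S * (d + 1 - #S) / d := by
  rw [← real_inner_self_eq_norm_sq, sum_inner]
  simp only [inner_sum, hf.inner_eq_ite_sub, sum_sub_distrib, sum_ite_eq, sum_const, nsmul_eq_mul]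
  rw [sum_ite_mem, inter_self, sum_const, nsmul_eq_mul]
  field_simp

end IsSimplexETF

end Simplex

section BlockDesign

variable {α β : Type*} [Fintype α] [DecidableEq α] [Fintype β]

theorem sum_smul_sum_eq_sum_card_smul {R M : Type*} [Semiring R] [AddCommMonoid M]
    [Module R M] (B : β → Finset α) (u : α → R) (w : α → M) :
    ∑ t, (∑ a ∈ B t, u a) • ∑ b ∈ B t, w b
      = ∑ a, ∑ b, #{t | a ∈ B t ∧ b ∈ B t} • u a • w b := by
  have hexpand : ∀ t, ∑ a ∈ B t, ∑ b ∈ B t, u a • w b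
      = ∑ a, ∑ b, if a ∈ B t ∧ b ∈ B t then u a • w b else 0 := by
    intro t
    simp only [ite_and, sum_ite_irrel, sum_ite_mem, univ_inter, sum_const_zero]
  simp only [sum_smul_sum, hexpand]
  rw [sum_comm]
  refine sum_congr rfl fun a _ ↦ ?_
  rw [sum_comm]
  simp only [← sum_filter, sum_const]

structure IsBlockDesign (B : β → Finset α) (k lam : ℕ) : Prop where
  card_block : ∀ t, #(B t) = k
  card_pair : ∀ x y, x ≠ y → #{t | x ∈ B t ∧ y ∈ B t} = lam

namespace IsBlockDesign

variable {B : β → Finset α} {k lam : ℕ}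

theorem card_filter_mem_mul (hB : IsBlockDesign B k lam) (x : α) :
    #{t | x ∈ B t} * (k - 1) = (Fintype.card α - 1) * lam := by
  rw [← card_univ, ← card_erase_of_mem (mem_univ x)]
  refine card_mul_eq_card_mul (fun t y ↦ y ∈ B t) (fun t ht ↦ ?_) (fun y hy ↦ ?_)
  · rw [mem_filter] at ht
    rw [bipartiteAbove, ← hB.card_block t, ← card_erase_of_mem ht.2]
    congr 1
    ext y
    simp [and_comm]
  · rw [bipartiteBelow, filter_filter, ← hB.card_pair x y (ne_of_mem_erase hy).symm]

theorem card_filter_mem_eq_div (hB : IsBlockDesign B k lam) (hk : 2 ≤ k) (x : α) :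
    (#{t | x ∈ B t} : ℝ) = (Fintype.card α - 1) * lam / (k - 1) := by
  have hk' : (1 : ℝ) < k := by exact_mod_cast hk
  have hα : 1 ≤ Fintype.card α := Fintype.card_pos_iff.mpr ⟨x⟩
  rw [eq_div_iff (sub_ne_zero.mpr hk'.ne'), ← Nat.cast_one, ← Nat.cast_sub hα,
    ← Nat.cast_sub (by omega), ← Nat.cast_mul, ← Nat.cast_mul, hB.card_filter_mem_mul]

theorem sum_smul_sum {M : Type*} [AddCommGroup M] [Module ℝ M] (hB : IsBlockDesign B k lam)
    {r : ℝ} (hr : ∀ x, (#{t | x ∈ B t} : ℝ) = r) (u : α → ℝ) (w : α → M) :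
    ∑ t, (∑ a ∈ B t, u a) • ∑ b ∈ B t, w b
      = (r - lam) • ∑ a, u a • w a + (lam : ℝ) • (∑ a, u a) • ∑ b, w b := by
  have hN : ∀ a b, (#{t | a ∈ B t ∧ b ∈ B t} : ℝ) = (if a = b then r - lam else 0) + lam := by
    intro a b
    split_ifs with hab
    · simp [hab, hr]
    · simp [hB.card_pair a b hab]
  rw [sum_smul_sum_eq_sum_card_smul]
  simp only [← Nat.cast_smul_eq_nsmul ℝ, hN, add_smul, sum_add_distrib, ite_smul, zero_smul,
    sum_ite_eq, mem_univ, if_true]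
  rw [Finset.sum_smul_sum, smul_sum]
  simp only [smul_sum]

end IsBlockDesign

end BlockDesign

section BlockSums

variable {E α β : Type*} [NormedAddCommGroup E] [InnerProductSpace ℝ E] [Fintype α]
  [DecidableEq α] [Fintype β] {d k lam : ℕ} {f : α → E} {B : β → Finset α}

theorem IsBlockDesign.sum_inner_smul_sum_of_mem_span (hf : IsSimplexETF d f) (hd : d ≠ 0)
    (hB : IsBlockDesign B k lam) (hk : 2 ≤ k) {v : E} (hv : v ∈ Submodule.span ℝ (Set.range f)) :
    ∑ t, ⟪v, ∑ a ∈ B t, f a⟫ • ∑ a ∈ B t, f a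
      = (lam * (d + 1 - k) / (k - 1) * ((d + 1) / d) : ℝ) • v := by
  have hk1 : (k : ℝ) - 1 ≠ 0 := sub_ne_zero.mpr (by norm_cast; omega)
  simp only [inner_sum]
  rw [hB.sum_smul_sum (hB.card_filter_mem_eq_div hk), hf.sum_eq_zero hd, smul_zero,
    smul_zero, add_zero, hf.sum_inner_smul_of_mem_span hd hv, smul_smul, hf.card_eq]
  congr 1
  push_cast
  field_simp
  ring

theorem IsBlockDesign.abs_inner_normalize_sum_le (hf : IsSimplexETF d f)
    (hB : IsBlockDesign B k lam) (hk : 2 ≤ k) (hkd : k ≤ d) {i j : β} (hij : i ≠ j) :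
    |⟪‖∑ a ∈ B i, f a‖⁻¹ • ∑ a ∈ B i, f a, ‖∑ a ∈ B j, f a‖⁻¹ • ∑ a ∈ B j, f a⟫|
      ≤ ((d : ℝ) + 1) * lam / (k * ((k : ℝ) - 1)) - 1 := by
  have hd : d ≠ 0 := by omega
  have hk1 : (0 : ℝ) < k - 1 := by
    have : (2 : ℝ) ≤ k := by exact_mod_cast hk
    linarith
  have hdk : (0 : ℝ) < d + 1 - k := by
    have : (k : ℝ) ≤ d := by exact_mod_cast hkd
    linarith
  set s : β → E := fun t ↦ ∑ a ∈ B t, f a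
  have hnormsq : ∀ t, ‖s t‖ ^ 2 = k * (d + 1 - k) / d := fun t ↦ by
    simp only [s, hf.norm_sum_sq hd, hB.card_block]
  have hP : (0 : ℝ) < k * (d + 1 - k) / d := by positivity
  have hs : s i ≠ 0 := fun h ↦ hP.ne' (by rw [← hnormsq i, h, norm_zero, sq, zero_mul])
  have hspan : Submodule.span ℝ (Set.range s) ≤ Submodule.span ℝ (Set.range f) :=
    Submodule.span_le.mpr <| Set.range_subset_iff.mpr fun t ↦
      Submodule.sum_mem _ fun a _ ↦ Submodule.subset_span ⟨a, rfl⟩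
  convert abs_inner_normalize_le_of_sum_inner_smul_eq (by positivity)
    (fun v hv ↦ hB.sum_inner_smul_sum_of_mem_span hf hd hk (hspan hv)) hij
    (by rw [← sq_eq_sq₀ (norm_nonneg _) (norm_nonneg _), hnormsq, hnormsq]) hs using 2
  rw [hnormsq]
  field_simp

end BlockSums

theorem block_design_coherence_bound_general (d b k lam : ℕ) (hk : 2 ≤ k)
    (hkd : k ≤ d)
    (f : Fin (d + 1) → EuclideanSpace ℝ (Fin d))
    (hnorm : ∀ i, ‖f i‖ = 1)
    (hangle : ∀ i j, i ≠ j → (inner ℝ (f i) (f j) : ℝ) = -1 / d)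
    (B : Fin b → Finset (Fin (d + 1)))
    (hBcard : ∀ i, (B i).card = k)
    (hpair : ∀ x y : Fin (d + 1), x ≠ y →
      (Finset.univ.filter (fun i => x ∈ B i ∧ y ∈ B i)).card = lam)
    (g : Fin b → EuclideanSpace ℝ (Fin d))
    (hg : ∀ i, g i = ‖∑ j ∈ B i, f j‖⁻¹ • ∑ j ∈ B i, f j) :
    ∀ i j : Fin b, i ≠ j →
      |(inner ℝ (g i) (g j) : ℝ)| ≤ ((d : ℝ) + 1) * lam / (k * ((k : ℝ) - 1)) - 1 := by
  intro i j hij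
  have hf : IsSimplexETF d f := by
    refine ⟨Fintype.card_fin _, fun a b ↦ ?_⟩
    split_ifs with hab
    · rw [hab, real_inner_self_eq_norm_sq, hnorm, one_pow]
    · exact hangle a b hab
  rw [hg, hg]
  exact IsBlockDesign.abs_inner_normalize_sum_le hf ⟨hBcard, hpair⟩ hk hkd hij

/-- Coherence bound for normalized block sums of a simplex ETF over a `(d+1, k, λ)`
block design: for `i ≠ j`, `|⟨g_i, g_j⟩| ≤ (d+1)λ/(k(k-1)) - 1`. -/
theorem block_design_coherence_bound (d b k lam : ℕ) (hd : 0 < d) (hk : 2 ≤ k)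
    (hkd : k ≤ d) (hlam : 0 < lam)
    (f : Fin (d + 1) → EuclideanSpace ℝ (Fin d))
    (hnorm : ∀ i, ‖f i‖ = 1)
    (hangle : ∀ i j, i ≠ j → (inner ℝ (f i) (f j) : ℝ) = -1 / d)
    (B : Fin b → Finset (Fin (d + 1)))
    (hBcard : ∀ i, (B i).card = k)
    (hpair : ∀ x y : Fin (d + 1), x ≠ y →
      (Finset.univ.filter (fun i => x ∈ B i ∧ y ∈ B i)).card = lam)
    (g : Fin b → EuclideanSpace ℝ (Fin d))
    (hg : ∀ i, g i = ‖∑ j ∈ B i, f j‖⁻¹ • ∑ j ∈ B i, f j) :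
    ∀ i j : Fin b, i ≠ j →
      |(inner ℝ (g i) (g j) : ℝ)| ≤ ((d : ℝ) + 1) * lam / (k * ((k : ℝ) - 1)) - 1 :=
  block_design_coherence_bound_general d b k lam hk hkd f hnorm hangle B hBcard hpair g hg
end
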